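/- arXiv:2605.30086 — 3 statements merged into one kernel-verified Lean document; each statement's English description precedes it below -/
import Mathlib

section
/- Let p be a prime and let P' be a saturated, sharp, uniquely p-divisible, p-finitely generated commutative monoid. Then there exists a finitely generated (fine) saturated sharp submonoid P₀ ⊆ P' such that P' = P₀[1/p], i.e., every element x ∈ P' satisfies p^k·x ∈ P₀ for some k ≥ 0, and conversely every x ∈ P'^gp with p^k·x ∈ P₀ for some k lies in P'. -/
/-- The additive submonoid `ℕ[1/p] = {a / p^k : a ∈ ℕ, k ≥ 0}` of `ℚ`. -/
def nLoc (p : ℕ) : AddSubmonoid ℚ where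
  carrier := {q : ℚ | ∃ (a : ℕ) (k : ℕ), q * (p : ℚ) ^ k = (a : ℚ)}
  zero_mem' := ⟨0, 0, by norm_num⟩
  add_mem' := by
    rintro x y ⟨a, k, ha⟩ ⟨b, l, hb⟩
    refine ⟨a * p ^ l + b * p ^ k, k + l, ?_⟩
    push_cast
    rw [pow_add]
    calc (x + y) * ((p : ℚ) ^ k * (p : ℚ) ^ l)
        = x * (p : ℚ) ^ k * (p : ℚ) ^ l + y * (p : ℚ) ^ l * (p : ℚ) ^ k := by ring
      _ = (a : ℚ) * (p : ℚ) ^ l + (b : ℚ) * (p : ℚ) ^ k := by rw [ha, hb]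

open Finset

/-- The monoid of lattice points in the rational cone spanned by `v`. -/
def coneMon {r m : ℕ} (v : Fin m → (Fin r → ℤ)) : AddSubmonoid (Fin r → ℤ) where
  carrier := {x | ∃ q : Fin m → ℚ, (∀ i, 0 ≤ q i) ∧ ∀ j, (x j : ℚ) = ∑ i, q i * (v i j)}
  zero_mem' := ⟨0, fun _ => le_refl 0, fun j => by simp⟩
  add_mem' := by
    rintro x y ⟨q, hq, hx⟩ ⟨q', hq', hy⟩
    exact ⟨q + q', fun i => add_nonneg (hq i) (hq' i), fun j => by
      simp only [Pi.add_apply, Int.cast_add, hx j, hy j, ← Finset.sum_add_distrib]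
      exact Finset.sum_congr rfl fun i _ => by ring⟩

/-- Gordan's lemma for lattice points of a rational cone. -/
theorem coneMon_fg {r m : ℕ} (v : Fin m → (Fin r → ℤ)) : (coneMon v).FG := by
  rw [AddSubmonoid.fg_iff]
  set D : Set (Fin r → ℤ) :=
    {x | ∃ q : Fin m → ℚ, (∀ i, 0 ≤ q i ∧ q i ≤ 1) ∧ ∀ j, (x j : ℚ) = ∑ i, q i * (v i j)}
  refine ⟨D, ?_, ?_⟩
  · apply le_antisymm
    · rw [AddSubmonoid.closure_le]
      rintro x ⟨q, hq, hx⟩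
      exact ⟨q, fun i => (hq i).1, hx⟩
    · rintro x ⟨q, hq, hx⟩
      -- integer parts
      set n : Fin m → ℕ := fun i => (⌊q i⌋).toNat with hn
      set d : Fin r → ℤ := x - ∑ i, n i • v i with hd
      have hnq : ∀ i, ((n i : ℤ) : ℚ) = (⌊q i⌋ : ℚ) := fun i => by
        rw [Int.toNat_of_nonneg (Int.floor_nonneg.2 (hq i))]
      have hdD : d ∈ D := by
        refine ⟨fun i => q i - ⌊q i⌋, fun i => ⟨by
          have := Int.fract_nonneg (q i); rwa [Int.fract] at this, by
          have := (Int.fract_lt_one (q i)).le; rwa [Int.fract] at this⟩, fun j => ?_⟩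
        have : (d j : ℚ) = (x j : ℚ) - ∑ i, ((n i : ℤ) : ℚ) * (v i j) := by
          simp only [hd, Pi.sub_apply, Finset.sum_apply, Pi.smul_apply, smul_eq_mul]
          push_cast
          rw [sub_right_inj]
          exact Finset.sum_congr rfl fun i _ => by push_cast [nsmul_eq_mul]; ring
        rw [this, hx j, ← Finset.sum_sub_distrib]
        refine Finset.sum_congr rfl fun i _ => ?_
        rw [hnq i]; ring
      have hvD : ∀ i, v i ∈ D := fun i =>
        ⟨fun k => if k = i then 1 else 0, fun k => by by_cases h : k = i <;> simp [h], fun j => by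
          simp [Finset.sum_ite_eq']⟩
      have hx' : x = d + ∑ i, n i • v i := by rw [hd]; ring
      rw [hx']
      exact add_mem (AddSubmonoid.subset_closure hdD)
        (sum_mem fun i _ => nsmul_mem (AddSubmonoid.subset_closure (hvD i)) _)
  · -- finiteness: D is in a box
    set B : Fin r → ℤ := fun j => ∑ i, |v i j| with hB
    refine Set.Finite.subset (Set.finite_Icc (-B) B) ?_
    rintro x ⟨q, hq, hx⟩
    have key : ∀ j, |x j| ≤ B j := by
      intro j
      have : |(x j : ℚ)| ≤ ((B j : ℤ) : ℚ) := by
        rw [hx j, hB]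
        refine (Finset.abs_sum_le_sum_abs _ _).trans ?_
        push_cast
        refine Finset.sum_le_sum fun i _ => ?_
        rw [abs_mul]
        calc |q i| * |((v i j : ℤ) : ℚ)| ≤ 1 * |((v i j : ℤ) : ℚ)| := by
              apply mul_le_mul_of_nonneg_right _ (abs_nonneg _)
              rw [abs_of_nonneg (hq i).1]; exact (hq i).2
          _ = |((v i j : ℤ) : ℚ)| := one_mul _
      rw [← Int.cast_abs] at this
      exact_mod_cast this
    constructor
    · intro j; simpa [neg_le] using (abs_le.1 (key j)).1
    · intro j; exact (abs_le.1 (key j)).2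

/-- Clearing denominators of a nonneg rational. -/
lemma exists_nat_mul_eq (q : ℚ) (hq : 0 ≤ q) {N : ℕ} (h : q.den ∣ N) :
    ∃ c : ℕ, q * N = (c : ℚ) := by
  obtain ⟨k, hk⟩ := h
  refine ⟨q.num.toNat * k, ?_⟩
  have hnum : (0:ℤ) ≤ q.num := Rat.num_nonneg.2 hq
  have : q * N = q * q.den * k := by rw [hk]; push_cast; ring
  have h2 : ((q.num.toNat : ℕ) : ℚ) = (q.num : ℚ) := by
    exact_mod_cast congrArg (fun z : ℤ => (z : ℚ)) (Int.toNat_of_nonneg hnum)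
  rw [this, Rat.mul_den_eq_num]
  push_cast
  rw [h2]

/-- Let `p` be a prime and `P'` a saturated, sharp, uniquely
`p`-divisible, `p`-finitely generated commutative monoid (group completion encoded by
`ι : P' →+ G`).  Then there exists a finitely generated (fine) saturated sharp
submonoid `P₀ ⊆ P'` with `P' = P₀[1/p]`:  every `x ∈ P'` has `p^k • x ∈ P₀` for some
`k ≥ 0`, and conversely every `x ∈ P'^gp` with `p^k • x ∈ P₀` for some `k` lies in `P'`.
(Saturatedness of `P₀` is taken inside the subgroup `P₀^gp ⊆ G` generated by `P₀`.) -/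
theorem stmt3 {p : ℕ} (hp : p.Prime)
    {P' G : Type*} [AddCommMonoid P'] [AddCommGroup G]
    (ι : P' →+ G) (hι : Function.Injective ι)
    (hgen : ∀ x : G, ∃ a b : P', x = ι a - ι b)
    (hsat : ∀ x : G, (∃ m : ℕ, 1 ≤ m ∧ m • x ∈ Set.range ι) → x ∈ Set.range ι)
    (hsharp : ∀ a b : P', a + b = 0 → a = 0 ∧ b = 0)
    (hdiv : Function.Bijective fun x : P' => p • x)
    (hinj : ∀ n : ℕ, 0 < n → Function.Injective fun x : P' => n • x)
    (hfg : ∃ (m : ℕ) (f : (Fin m → ↥(nLoc p)) →+ P'), Function.Surjective f) :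
    ∃ P₀ : AddSubmonoid P',
      P₀.FG ∧
      (∀ a ∈ P₀, ∀ b ∈ P₀, a + b = 0 → a = 0 ∧ b = 0) ∧
      (∀ x : G, (∃ a ∈ P₀, ∃ b ∈ P₀, x = ι a - ι b) →
        (∃ m : ℕ, 1 ≤ m ∧ m • x ∈ ⇑ι '' (P₀ : Set P')) → x ∈ ⇑ι '' (P₀ : Set P')) ∧
      (∀ x : P', ∃ k : ℕ, p ^ k • x ∈ P₀) ∧
      (∀ x : G, (∃ k : ℕ, p ^ k • x ∈ ⇑ι '' (P₀ : Set P')) → x ∈ Set.range ι) := by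
  obtain ⟨m, f, hf⟩ := hfg
  have hppos : 0 < p := hp.pos
  have h1 : (1:ℚ) ∈ nLoc p := ⟨1, 0, by norm_num⟩
  set δ : Fin m → (Fin m → ↥(nLoc p)) := fun i => Pi.single i ⟨1, h1⟩ with hδ
  set xg : Fin m → P' := fun i => f (δ i) with hxg
  set g : Fin m → G := fun i => ι (xg i) with hg
  set L : AddSubgroup G := AddSubgroup.closure (Set.range g) with hL
  set P₀ : AddSubmonoid P' := AddSubmonoid.comap ι L.toAddSubmonoid with hP₀
  have hmemP₀ : ∀ y : P', (y ∈ P₀ ↔ ι y ∈ L) := fun y => Iff.rfl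
  have hgL : ∀ i, g i ∈ L := fun i => AddSubgroup.subset_closure ⟨i, rfl⟩
  -- decomposition of any element after multiplying by a power of p
  have key : ∀ w : P', ∃ (K : ℕ) (b : Fin m → ℕ), p ^ K • w = ∑ i, b i • xg i := by
    intro w
    obtain ⟨t, ht⟩ := hf w
    choose a k hak using fun i => (t i).2
    set K := Finset.univ.sup k with hK
    refine ⟨K, fun i => a i * p ^ (K - k i), ?_⟩
    have hteq : (p ^ K) • t = ∑ i, (a i * p ^ (K - k i)) • δ i := by
      funext j
      apply Subtype.ext
      have hterm : ∀ i : Fin m, (((a i * p ^ (K - k i)) • δ i j : ↥(nLoc p)) : ℚ)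
          = (a i * p ^ (K - k i) : ℕ) * (if j = i then (1:ℚ) else 0) := by
        intro i
        rw [hδ]
        simp only [Pi.single_apply]
        by_cases h : j = i <;> simp [h]
      have hco : (((∑ i, (a i * p ^ (K - k i)) • δ i) j : ↥(nLoc p)) : ℚ)
          = (a j : ℚ) * (p:ℚ) ^ (K - k j) := by
        rw [Finset.sum_apply, AddSubmonoidClass.coe_finset_sum]
        simp only [Pi.smul_apply]
        rw [Finset.sum_congr rfl fun i _ => hterm i]
        simp only [mul_ite, mul_one, mul_zero]
        rw [Finset.sum_ite_eq Finset.univ j (fun i => ((a i * p ^ (K - k i) : ℕ) : ℚ))]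
        simp only [Finset.mem_univ, if_true]
        push_cast
        ring
      have hcoL : ((((p ^ K) • t) j : ↥(nLoc p)) : ℚ) = (p:ℚ) ^ K * (t j : ℚ) := by
        simp only [Pi.smul_apply]
        have : (((p ^ K • t j : ↥(nLoc p))) : ℚ) = (p ^ K : ℕ) • ((t j : ℚ)) := rfl
        rw [this, nsmul_eq_mul]
        push_cast
        ring
      rw [hcoL, hco]
      have hkj : k j ≤ K := Finset.le_sup (Finset.mem_univ j)
      have hsplit : (p:ℚ) ^ K = (p:ℚ) ^ (K - k j) * (p:ℚ) ^ (k j) := by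
        rw [← pow_add]; congr 1; omega
      rw [hsplit]
      calc (p:ℚ) ^ (K - k j) * (p:ℚ) ^ (k j) * (t j : ℚ)
          = ((t j : ℚ) * (p:ℚ) ^ (k j)) * (p:ℚ) ^ (K - k j) := by ring
        _ = (a j : ℚ) * (p:ℚ) ^ (K - k j) := by rw [hak j]
    calc p ^ K • w = f ((p ^ K) • t) := by rw [← ht, map_nsmul]
      _ = ∑ i, (a i * p ^ (K - k i)) • xg i := by
          rw [hteq, map_sum]
          exact Finset.sum_congr rfl fun i _ => by rw [map_nsmul, hxg]
  -- image of sums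
  have hsum : ∀ b : Fin m → ℕ, (∑ i, b i • xg i) ∈ P₀ ∧
      ι (∑ i, b i • xg i) = ∑ i, b i • g i := by
    intro b
    have h2 : ι (∑ i, b i • xg i) = ∑ i, b i • g i := by
      rw [map_sum]; exact Finset.sum_congr rfl fun i _ => map_nsmul ι _ _
    refine ⟨?_, h2⟩
    rw [hmemP₀, h2]
    exact AddSubgroup.sum_mem _ fun i _ => AddSubgroup.nsmul_mem _ (hgL i) _
  refine ⟨P₀, ?_, fun a _ b _ h => hsharp a b h, ?_, ?_, ?_⟩
  · -- FG
    haveI hGtf : NoZeroSMulDivisors ℤ G := by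
      refine ⟨fun {c x} h => ?_⟩
      by_cases hc : c = 0
      · exact Or.inl hc
      · right
        set n : ℕ := c.natAbs * c.natAbs with hn
        have hnpos : 0 < n :=
          Nat.mul_pos (Int.natAbs_pos.2 hc) (Int.natAbs_pos.2 hc)
        have hnx : n • x = 0 := by
          have h2 : ((n : ℤ)) • x = (c * c) • x := by
            congr 1
            rw [hn]; push_cast; exact abs_mul_abs_self c
          have h3 : (c * c) • x = 0 := by rw [mul_smul, h, smul_zero]
          rw [← natCast_zsmul, h2, h3]
        obtain ⟨u, w, huw⟩ := hgen x
        have h0 : n • x = 0 := hnx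
        rw [huw, smul_sub] at h0
        have h4 : ι (n • u) = ι (n • w) := by
          rw [map_nsmul, map_nsmul]
          exact sub_eq_zero.1 h0
        have h5 : u = w := hinj n hnpos (hι h4)
        rw [huw, h5, sub_self]
    haveI : AddGroup.FG ↥L := (AddGroup.fg_iff_addSubgroup_fg L).2
      ((AddSubgroup.fg_iff L).2 ⟨Set.range g, rfl, Set.finite_range g⟩)
    haveI : Module.Finite ℤ ↥L := Module.Finite.iff_addGroup_fg.2 ‹_›
    haveI : NoZeroSMulDivisors ℤ ↥L := by
      refine ⟨fun {c y} h => ?_⟩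
      have h' : c • (y : G) = 0 := by
        have := congrArg (fun z : ↥L => (z : G)) h
        simpa using this
      rcases eq_zero_or_eq_zero_of_smul_eq_zero h' with h|h
      · exact Or.inl h
      · exact Or.inr (Subtype.ext h)
    haveI : Module.Free ℤ ↥L := Module.free_of_finite_type_torsion_free'
    set r : ℕ := Fintype.card (Module.Free.ChooseBasisIndex ℤ ↥L) with hr
    set e : ↥L ≃ₗ[ℤ] (Fin r → ℤ) :=
      ((Module.Free.chooseBasis ℤ ↥L).reindex (Fintype.equivFin _)).equivFun with he
    set E : ↥L ≃+ (Fin r → ℤ) := e.toAddEquiv with hE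
    set gL : Fin m → ↥L := fun i => ⟨g i, hgL i⟩ with hgLdef
    set v : Fin m → (Fin r → ℤ) := fun i => E (gL i) with hv
    have main : ∀ y : ↥L, ((y : G) ∈ ⇑ι '' (P₀ : Set P')) ↔ E y ∈ coneMon v := by
      intro y
      constructor
      · rintro ⟨w, hwP₀, hwy⟩
        obtain ⟨K, b, hKb⟩ := key w
        have h1 : p ^ K • (y : G) = ∑ i, b i • g i := by
          rw [← hwy, ← map_nsmul, hKb, (hsum b).2]
        have h2 : p ^ K • y = ∑ i, b i • gL i := by
          apply Subtype.ext
          rw [show ((p ^ K • y : ↥L) : G) = p ^ K • (y : G) from rfl]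
          rw [AddSubmonoidClass.coe_finset_sum, h1]
          exact Finset.sum_congr rfl fun i _ => rfl
        have h3 : p ^ K • E y = ∑ i, b i • v i := by
          rw [← map_nsmul E, h2, map_sum]
          exact Finset.sum_congr rfl fun i _ => map_nsmul E _ _
        have hpK : (0:ℚ) < (p:ℚ) ^ K := by positivity
        refine ⟨fun i => (b i : ℚ) / (p:ℚ) ^ K, fun i => by positivity, fun j => ?_⟩
        have h4 : ((p ^ K : ℕ) : ℤ) * (E y j) = ∑ i, ((b i : ℕ) : ℤ) * v i j := by
          have := congrFun h3 j
          simpa only [Pi.smul_apply, Finset.sum_apply, nsmul_eq_mul, Pi.mul_apply, Pi.natCast_apply] using this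
        have h5 : ((p:ℚ)) ^ K * ((E y j : ℤ) : ℚ) = ∑ i, (b i : ℚ) * ((v i j : ℤ) : ℚ) := by
          exact_mod_cast congrArg (fun z : ℤ => (z : ℚ)) h4
        have h6 : ∑ i, ((b i : ℚ) / (p:ℚ) ^ K) * ((v i j : ℤ) : ℚ)
            = (∑ i, (b i : ℚ) * ((v i j : ℤ) : ℚ)) / (p:ℚ) ^ K := by
          rw [Finset.sum_div]
          exact Finset.sum_congr rfl fun i _ => by ring
        rw [h6, ← h5]
        field_simp
      · rintro ⟨q, hq, hcoord⟩
        set N : ℕ := ∏ i, (q i).den with hN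
        have hN1 : 1 ≤ N := Finset.prod_pos fun i _ => (q i).pos
        have hden : ∀ i, (q i).den ∣ N := fun i => Finset.dvd_prod_of_mem _ (Finset.mem_univ i)
        choose b hb using fun i => exists_nat_mul_eq (q i) (hq i) (hden i)
        have h4 : N • E y = ∑ i, b i • v i := by
          funext j
          have hq2 : (N:ℚ) * ((E y j : ℤ) : ℚ) = ∑ i, ((b i : ℕ) : ℚ) * ((v i j : ℤ) : ℚ) := by
            rw [hcoord j, Finset.mul_sum]
            exact Finset.sum_congr rfl fun i _ => by rw [← hb i]; ring
          have hz : ((N:ℕ) : ℤ) * E y j = ∑ i, ((b i : ℕ) : ℤ) * v i j := by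
            exact_mod_cast hq2
          simp only [Pi.smul_apply, Finset.sum_apply, nsmul_eq_mul]
          exact hz
        have h5 : N • y = ∑ i, b i • gL i := by
          apply E.injective
          rw [map_nsmul, map_sum, h4]
          exact Finset.sum_congr rfl fun i _ => (map_nsmul E _ _).symm
        have h6 : N • (y : G) = ι (∑ i, b i • xg i) := by
          have hc : ((N • y : ↥L) : G) = ((∑ i, b i • gL i : ↥L) : G) :=
            congrArg Subtype.val h5
          rw [AddSubmonoidClass.coe_finset_sum] at hc
          calc N • (y : G) = ((N • y : ↥L) : G) := rfl
            _ = ∑ i, ((b i • gL i : ↥L) : G) := hc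
            _ = ∑ i, b i • g i := Finset.sum_congr rfl fun i _ => rfl
            _ = ι (∑ i, b i • xg i) := ((hsum b).2).symm
        obtain ⟨w, hw⟩ := hsat (y : G) ⟨N, hN1, ⟨∑ i, b i • xg i, h6.symm⟩⟩
        exact ⟨w, (hmemP₀ w).2 (by rw [hw]; exact y.2), hw⟩
    -- transfer FG through the equivalence and the inclusions
    set S₀ := AddSubmonoid.map E.symm.toAddMonoidHom (coneMon v) with hS₀def
    have hS₀fg : S₀.FG := (coneMon_fg v).map _
    have hA : AddSubmonoid.map L.subtype S₀ = AddSubmonoid.map ι P₀ := by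
      ext z
      simp only [AddSubmonoid.mem_map]
      constructor
      · rintro ⟨y, hyS₀, rfl⟩
        have hEy : E y ∈ coneMon v := by
          rcases hyS₀ with ⟨c, hc, hcy⟩
          rw [← hcy]
          simpa using hc
        obtain ⟨w, hw1, hw2⟩ := (main y).2 hEy
        exact ⟨w, hw1, hw2⟩
      · rintro ⟨w, hwP₀, rfl⟩
        have hιw : ι w ∈ L := (hmemP₀ w).1 hwP₀
        have hEy : E ⟨ι w, hιw⟩ ∈ coneMon v := (main ⟨ι w, hιw⟩).1 ⟨w, hwP₀, rfl⟩
        exact ⟨⟨ι w, hιw⟩, ⟨E ⟨ι w, hιw⟩, hEy, by simp⟩, rfl⟩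
    have hAFG : (AddSubmonoid.map ι P₀).FG := hA ▸ hS₀fg.map L.subtype
    obtain ⟨S, hSclos, hSfin⟩ := (AddSubmonoid.fg_iff _).1 hAFG
    have hSsub : S ⊆ (AddSubmonoid.map ι P₀ : Set G) := hSclos ▸ AddSubmonoid.subset_closure
    set S' : Set P' := (⇑ι) ⁻¹' S ∩ (P₀ : Set P') with hS'def
    have himg : ⇑ι '' S' = S := by
      ext z
      constructor
      · rintro ⟨w, ⟨hw1, _⟩, rfl⟩
        exact hw1
      · intro hz
        obtain ⟨w, hwP₀, hwz⟩ := hSsub hz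
        exact ⟨w, ⟨by rw [Set.mem_preimage, hwz]; exact hz, hwP₀⟩, hwz⟩
    have hS'fin : S'.Finite :=
      ((hSfin.preimage (hι.injOn)).subset Set.inter_subset_left : S'.Finite)
    rw [AddSubmonoid.fg_iff]
    refine ⟨S', ?_, hS'fin⟩
    apply AddSubmonoid.map_injective_of_injective hι
    rw [AddMonoidHom.map_mclosure, himg, hSclos]
  · -- saturation
    rintro x ⟨a, ha, b, hb, hx⟩ ⟨n, hn1, c, hcP₀, hcx⟩
    have hxL : x ∈ L := by
      rw [hx]; exact sub_mem ((hmemP₀ a).1 ha) ((hmemP₀ b).1 hb)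
    obtain ⟨w, hw⟩ := hsat x ⟨n, hn1, ⟨c, hcx⟩⟩
    exact ⟨w, (hmemP₀ w).2 (by rw [hw]; exact hxL), hw⟩
  · -- divisibility
    intro x
    obtain ⟨K, b, hKb⟩ := key x
    exact ⟨K, by rw [hKb]; exact (hsum b).1⟩
  · -- last condition
    rintro x ⟨k, c, hcP₀, hcx⟩
    exact hsat x ⟨p ^ k, Nat.one_le_iff_ne_zero.2 (pow_ne_zero k hppos.ne'), ⟨c, hcx⟩⟩
end

section
/- Let L be a finitely generated free abelian group and M ⊆ L a finitely generated submonoid. Then the saturation M^sat = {x ∈ M^gp : n·x ∈ M for some integer n ≥ 1}, computed inside the subgroup M^gp of L generated by M, is a finitely generated monoid. -/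
/-- Let `L` be a finitely generated free abelian group and `M ⊆ L` a
finitely generated submonoid.  Then the saturation
`M^sat = {x ∈ M^gp : n • x ∈ M for some n ≥ 1}`, computed inside the subgroup
`M^gp ⊆ L` generated by `M`, is a finitely generated monoid. -/
theorem stmt4 {L : Type*} [AddCommGroup L] [Module.Free ℤ L] [Module.Finite ℤ L]
    (M : AddSubmonoid L) (hM : M.FG) :
    ∃ T : AddSubmonoid L,
      (T : Set L) =
        {x : L | x ∈ AddSubgroup.closure (M : Set L) ∧ ∃ n : ℕ, 1 ≤ n ∧ n • x ∈ M} ∧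
      T.FG := by
  classical
  obtain ⟨S, hS⟩ := hM
  have hSM : (S : Set L) ⊆ (M : Set L) := by
    rw [← hS]; exact AddSubmonoid.subset_closure
  set b := Module.Free.chooseBasis ℤ L with hb
  set ι := Module.Free.ChooseBasisIndex ℤ L
  -- the saturation, as a set
  set Sat : Set L :=
    {x : L | x ∈ AddSubgroup.closure (M : Set L) ∧ ∃ n : ℕ, 1 ≤ n ∧ n • x ∈ M} with hSat
  -- the saturation is an additive submonoid
  have satAdd : ∀ x ∈ Sat, ∀ y ∈ Sat, x + y ∈ Sat := by
    rintro x ⟨hxg, n, hn, hnx⟩ y ⟨hyg, m, hm, hmy⟩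
    refine ⟨AddSubgroup.add_mem _ hxg hyg, n * m, Nat.one_le_iff_ne_zero.mpr
      (Nat.mul_ne_zero (Nat.one_le_iff_ne_zero.mp hn) (Nat.one_le_iff_ne_zero.mp hm)), ?_⟩
    rw [smul_add]
    refine M.add_mem ?_ ?_
    · rw [mul_comm, mul_smul]; exact AddSubmonoid.nsmul_mem M hnx m
    · rw [mul_smul]; exact AddSubmonoid.nsmul_mem M hmy n
  -- coordinate bound
  set B : ι → ℤ := fun i => ∑ s ∈ S, |b.repr s i| with hB
  set D : Set L := {x : L | x ∈ Sat ∧ ∀ i, |b.repr x i| ≤ B i} with hD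
  -- D is finite
  have hDfin : D.Finite := by
    have hinj : Function.Injective (fun x : L => fun i : ι => b.repr x i) := by
      intro x y h
      apply b.repr.injective
      ext i
      exact congrFun h i
    have hbox : (Set.pi Set.univ fun i : ι => Set.Icc (-(B i)) (B i)).Finite :=
      Set.Finite.pi fun i => Set.finite_Icc _ _
    have hsub : D ⊆ (fun x : L => fun i : ι => b.repr x i) ⁻¹'
        (Set.pi Set.univ fun i : ι => Set.Icc (-(B i)) (B i)) := by
      intro x hx i _
      exact abs_le.mp (hx.2 i)
    exact ((hbox.preimage hinj.injOn)).subset hsub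
  -- the generating set
  set A : Set L := (S : Set L) ∪ D with hA
  have hAfin : A.Finite := (S.finite_toSet).union hDfin
  refine ⟨AddSubmonoid.closure A, ?_, ⟨hAfin.toFinset, by rw [Set.Finite.coe_toFinset]⟩⟩
  apply subset_antisymm
  · -- closure A ⊆ Sat
    have hASat : A ⊆ Sat := by
      rintro x (hx | hx)
      · exact ⟨AddSubgroup.subset_closure (hSM hx), 1, le_refl 1, by simpa using hSM hx⟩
      · exact hx.1
    intro x hx
    exact AddSubmonoid.closure_induction (fun y hy => hASat hy)
      ⟨AddSubgroup.zero_mem _, 1, le_refl 1, by simpa using M.zero_mem⟩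
      (fun y z _ _ hy hz => satAdd y hy z hz) hx
  · -- Sat ⊆ closure A
    rintro x ⟨hxg, n, hn, hnx⟩
    have hnpos : 0 < n := hn
    -- write n • x as a ℕ-combination of S
    have hnx' : n • x ∈ Submodule.span ℕ (S : Set L) := by
      rw [← Submodule.mem_toAddSubmonoid, Submodule.span_nat_eq_addSubmonoidClosure, hS]
      exact hnx
    obtain ⟨a, -, ha⟩ := Submodule.mem_span_finset.mp hnx'
    set g : L → ℕ := fun s => a s / n with hg
    set y : L := ∑ s ∈ S, g s • s with hy
    set r : L := x - y with hr
    have hyM : y ∈ M := M.sum_mem fun s hs => AddSubmonoid.nsmul_mem M (hSM hs) _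
    -- key identity : n • r = ∑ (a s % n) • s
    have key : n • r = ∑ s ∈ S, (a s % n) • s := by
      have h1 : n • y = ∑ s ∈ S, (n * g s) • s := by
        rw [hy, Finset.smul_sum]
        exact Finset.sum_congr rfl fun s _ => (mul_smul n (g s) s).symm
      have h2 : ∀ s : L, a s • s = (a s % n) • s + (n * (a s / n)) • s := by
        intro s
        rw [← add_smul, Nat.mod_add_div]
      rw [hr, smul_sub, h1, ← ha]
      rw [Finset.sum_congr rfl fun s _ => h2 s, Finset.sum_add_distrib]
      simp [hg]
    have hnrM : n • r ∈ M := by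
      rw [key]
      exact M.sum_mem fun s hs => AddSubmonoid.nsmul_mem M (hSM hs) _
    have hrSat : r ∈ Sat := by
      refine ⟨?_, n, hn, hnrM⟩
      exact AddSubgroup.sub_mem _ hxg (AddSubgroup.subset_closure hyM)
    -- coordinate bound for r
    have hrD : r ∈ D := by
      refine ⟨hrSat, fun i => ?_⟩
      have hco : (n : ℤ) * b.repr r i = ∑ s ∈ S, ((a s % n : ℕ) : ℤ) * b.repr s i := by
        have := congrArg (fun z => b.repr z i) key
        simpa [map_nsmul, Finsupp.smul_apply, nsmul_eq_mul, map_sum, Finset.sum_apply'] using this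
      have habs : |(n : ℤ) * b.repr r i| ≤ (n : ℤ) * B i := by
        rw [hco]
        calc |∑ s ∈ S, ((a s % n : ℕ) : ℤ) * b.repr s i|
            ≤ ∑ s ∈ S, |((a s % n : ℕ) : ℤ) * b.repr s i| := Finset.abs_sum_le_sum_abs _ _
          _ ≤ ∑ s ∈ S, (n : ℤ) * |b.repr s i| := by
              refine Finset.sum_le_sum fun s _ => ?_
              rw [abs_mul, abs_of_nonneg (Int.natCast_nonneg _)]
              refine mul_le_mul_of_nonneg_right ?_ (abs_nonneg _)
              exact_mod_cast (Nat.mod_lt _ hnpos).le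
          _ = (n : ℤ) * B i := by rw [hB, Finset.mul_sum]
      have hnz : (0 : ℤ) < n := by exact_mod_cast hnpos
      rw [abs_mul, abs_of_pos hnz] at habs
      exact le_of_mul_le_mul_left habs hnz
    -- assemble
    have hx' : x = y + r := by rw [hr]; abel
    have hyT : y ∈ AddSubmonoid.closure A := by
      rw [hy]
      exact sum_mem fun s hs => nsmul_mem (AddSubmonoid.subset_closure (Set.mem_union_left _ (Finset.mem_coe.mpr hs))) _
    show x ∈ AddSubmonoid.closure A
    rw [hx']
    exact add_mem hyT (AddSubmonoid.subset_closure (Set.mem_union_right _ hrD))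
end

section
/- Let p be a prime, L a finitely generated free abelian group, and Q ⊆ L a fine saturated submonoid (saturated inside its group completion Q^gp ⊆ L). Set Q_∞ = ⋃_{k≥0} {x ∈ Q^gp ⊗ ℤ[1/p] : p^k·x ∈ Q}. Let j: Q → Q_∞ be the inclusion and ψ: Q → Q^gp ⊕ Q_∞ the map x ↦ (x, x). Then the saturation of the pushout (amalgamated sum) Q_∞ ⊕_{j, Q, ψ} (Q^gp ⊕ Q_∞) in the category of commutative monoids is isomorphic to Q_∞ ⊕ Q_∞^gp; moreover, the isomorphism identifies the generators as the classes of (u, 0, 0) for u ∈ Q_∞ and of (−v, 0, v) for v ∈ Q_∞^gp. -/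
/-- The coordinatewise inclusion `ℤ^n →+ ℚ^n`. -/
def ratify {n : ℕ} : (Fin n → ℤ) →+ (Fin n → ℚ) :=
  AddMonoidHom.mk' (fun x i => (x i : ℚ)) (by intro a b; funext i; simp)

/-- `p`-power division hull of a subset `S ⊆ ℚ^n`: the elements `x` with `p^k • x ∈ S`
for some `k ≥ 0`. -/
def pRoots (p : ℕ) {n : ℕ} (S : Set (Fin n → ℚ)) : Set (Fin n → ℚ) :=
  {x : Fin n → ℚ | ∃ k : ℕ, p ^ k • x ∈ S}

/-- The image of a fine submonoid `Q ⊆ ℤ^n` in `ℚ^n`. -/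
def QZ {n : ℕ} (Q : AddSubmonoid (Fin n → ℤ)) : Set (Fin n → ℚ) :=
  ⇑ratify '' (Q : Set (Fin n → ℤ))

/-- The image of the group completion `Q^gp ⊆ ℤ^n` in `ℚ^n`. -/
def QgpZ {n : ℕ} (Q : AddSubmonoid (Fin n → ℤ)) : Set (Fin n → ℚ) :=
  ⇑ratify '' ((AddSubgroup.closure (Q : Set (Fin n → ℤ)) : AddSubgroup (Fin n → ℤ)) :
    Set (Fin n → ℤ))

/-- The underlying set of `Q_∞ ⊕_{j,Q,ψ} (Q^gp ⊕ Q_∞)` (before the congruence), realized as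
the subset of `ℚ^n × ℚ^n × ℚ^n` of triples `(a, b, c)` with `a, c ∈ Q_∞` and `b ∈ Q^gp`. -/
def Nset (p : ℕ) {n : ℕ} (Q : AddSubmonoid (Fin n → ℤ)) :
    Set ((Fin n → ℚ) × (Fin n → ℚ) × (Fin n → ℚ)) :=
  {t | t.1 ∈ pRoots p (QZ Q) ∧ t.2.1 ∈ QgpZ Q ∧ t.2.2 ∈ pRoots p (QZ Q)}

/-- The generators `j(q) − ψ(q) = (q, −q, −q)` of the pushout congruence. -/
def relSet {n : ℕ} (Q : AddSubmonoid (Fin n → ℤ)) :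
    Set ((Fin n → ℚ) × (Fin n → ℚ) × (Fin n → ℚ)) :=
  {z | ∃ q ∈ Q, z = (ratify q, -ratify q, -ratify q)}

section Aux

variable {p n : ℕ} {Q : AddSubmonoid (Fin n → ℤ)}

lemma ratify_injective : Function.Injective (ratify (n := n)) := by
  intro a b h
  funext i
  have := congrFun h i
  simpa [ratify] using this

/-- `Q^gp` in `ℚ^n`, as an `AddSubgroup`. -/
def Ggrp (Q : AddSubmonoid (Fin n → ℤ)) : AddSubgroup (Fin n → ℚ) :=
  (AddSubgroup.closure (Q : Set (Fin n → ℤ))).map ratify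

lemma mem_QgpZ {x : Fin n → ℚ} : x ∈ QgpZ Q ↔ x ∈ Ggrp Q := by
  simp [QgpZ, Ggrp, AddSubgroup.mem_map, Set.mem_image]

lemma QZ_subset_QgpZ : QZ Q ⊆ QgpZ Q :=
  Set.image_mono AddSubgroup.subset_closure

lemma zero_mem_QZ : (0 : Fin n → ℚ) ∈ QZ Q :=
  ⟨0, Q.zero_mem, map_zero _⟩

lemma add_mem_QZ {a b : Fin n → ℚ} (ha : a ∈ QZ Q) (hb : b ∈ QZ Q) :
    a + b ∈ QZ Q := by
  obtain ⟨qa, hqa, rfl⟩ := ha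
  obtain ⟨qb, hqb, rfl⟩ := hb
  exact ⟨qa + qb, Q.add_mem hqa hqb, map_add _ _ _⟩

lemma nsmul_mem_QZ {a : Fin n → ℚ} (m : ℕ) (ha : a ∈ QZ Q) :
    m • a ∈ QZ Q := by
  obtain ⟨qa, hqa, rfl⟩ := ha
  exact ⟨m • qa, AddSubmonoid.nsmul_mem Q hqa m, map_nsmul _ _ _⟩

lemma zero_mem_Ainf : (0 : Fin n → ℚ) ∈ pRoots p (QZ Q) :=
  ⟨0, by simpa using zero_mem_QZ⟩

lemma add_mem_Ainf {a b : Fin n → ℚ} (ha : a ∈ pRoots p (QZ Q))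
    (hb : b ∈ pRoots p (QZ Q)) : a + b ∈ pRoots p (QZ Q) := by
  obtain ⟨k, hk⟩ := ha
  obtain ⟨l, hl⟩ := hb
  refine ⟨k + l, ?_⟩
  have : p ^ (k + l) • (a + b) = p ^ l • (p ^ k • a) + p ^ k • (p ^ l • b) := by
    rw [smul_add, ← mul_smul, ← mul_smul, ← pow_add, ← pow_add, add_comm l k]
  rw [this]
  exact add_mem_QZ (nsmul_mem_QZ _ hk) (nsmul_mem_QZ _ hl)

lemma nsmul_mem_Ainf {a : Fin n → ℚ} (m : ℕ) (ha : a ∈ pRoots p (QZ Q)) :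
    m • a ∈ pRoots p (QZ Q) := by
  obtain ⟨k, hk⟩ := ha
  exact ⟨k, by rw [smul_comm]; exact nsmul_mem_QZ m hk⟩

/-- `Q_∞^gp = pRoots p (QgpZ Q)` as an `AddSubgroup`. -/
def Ginf (p : ℕ) {n : ℕ} (Q : AddSubmonoid (Fin n → ℤ)) : AddSubgroup (Fin n → ℚ) where
  carrier := pRoots p (QgpZ Q)
  zero_mem' := ⟨0, by simpa using mem_QgpZ.mpr (Ggrp Q).zero_mem⟩
  add_mem' := by
    rintro a b ⟨k, hk⟩ ⟨l, hl⟩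
    refine ⟨k + l, ?_⟩
    have : p ^ (k + l) • (a + b) = p ^ l • (p ^ k • a) + p ^ k • (p ^ l • b) := by
      rw [smul_add, ← mul_smul, ← mul_smul, ← pow_add, ← pow_add, add_comm l k]
    rw [this]
    exact mem_QgpZ.mpr ((Ggrp Q).add_mem
      (AddSubgroup.nsmul_mem _ (mem_QgpZ.mp hk) _)
      (AddSubgroup.nsmul_mem _ (mem_QgpZ.mp hl) _))
  neg_mem' := by
    rintro a ⟨k, hk⟩
    exact ⟨k, by rw [smul_neg]; exact mem_QgpZ.mpr ((Ggrp Q).neg_mem (mem_QgpZ.mp hk))⟩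

lemma mem_Ginf {x : Fin n → ℚ} : x ∈ Ginf p Q ↔ x ∈ pRoots p (QgpZ Q) := Iff.rfl

lemma Ainf_subset_Ginf {a : Fin n → ℚ} (ha : a ∈ pRoots p (QZ Q)) : a ∈ Ginf p Q := by
  obtain ⟨k, hk⟩ := ha
  exact ⟨k, QZ_subset_QgpZ hk⟩

lemma QgpZ_subset_Ginf {a : Fin n → ℚ} (ha : a ∈ QgpZ Q) : a ∈ Ginf p Q :=
  ⟨0, by simpa using ha⟩

lemma mem_closure_sub {x : Fin n → ℤ} :
    x ∈ AddSubgroup.closure (Q : Set (Fin n → ℤ)) ↔ ∃ a ∈ Q, ∃ b ∈ Q, x = a - b := by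
  constructor
  · intro hx
    induction hx using AddSubgroup.closure_induction with
    | mem y hy => exact ⟨y, hy, 0, Q.zero_mem, by simp⟩
    | zero => exact ⟨0, Q.zero_mem, 0, Q.zero_mem, by simp⟩
    | add y z hy hz ihy ihz =>
      obtain ⟨a, ha, b, hb, rfl⟩ := ihy
      obtain ⟨c, hc, d, hd, rfl⟩ := ihz
      exact ⟨a + c, Q.add_mem ha hc, b + d, Q.add_mem hb hd, by abel⟩
    | neg y hy ihy =>
      obtain ⟨a, ha, b, hb, rfl⟩ := ihy
      exact ⟨b, hb, a, ha, by abel⟩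
  · rintro ⟨a, ha, b, hb, rfl⟩
    exact sub_mem (AddSubgroup.subset_closure ha) (AddSubgroup.subset_closure hb)

lemma Ginf_sub (hp : p.Prime) {x : Fin n → ℚ} (hx : x ∈ pRoots p (QgpZ Q)) :
    ∃ a ∈ pRoots p (QZ Q), ∃ b ∈ pRoots p (QZ Q), x = a - b := by
  obtain ⟨k, g, hg, hgx⟩ := hx
  obtain ⟨q1, hq1, q2, hq2, rfl⟩ := mem_closure_sub.mp hg
  have hpk : ((p : ℚ) ^ k) ≠ 0 := pow_ne_zero _ (by exact_mod_cast hp.pos.ne')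
  set c : ℚ := ((p : ℚ) ^ k)⁻¹ with hc
  have key : ∀ y : Fin n → ℚ, p ^ k • (c • y) = y := by
    intro y
    rw [← Nat.cast_smul_eq_nsmul ℚ, smul_smul]
    push_cast
    rw [mul_inv_cancel₀ hpk, one_smul]
  refine ⟨c • ratify q1, ⟨k, by rw [key]; exact ⟨q1, hq1, rfl⟩⟩,
    c • ratify q2, ⟨k, by rw [key]; exact ⟨q2, hq2, rfl⟩⟩, ?_⟩
  have : x = c • (p ^ k • x) := by
    rw [← Nat.cast_smul_eq_nsmul ℚ, smul_smul]
    push_cast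
    rw [inv_mul_cancel₀ hpk, one_smul]
  rw [this, ← hgx, map_sub, smul_sub]

lemma middle_mem_QgpZ {t : (Fin n → ℚ) × (Fin n → ℚ) × (Fin n → ℚ)}
    (ht : t ∈ AddSubgroup.closure (Nset p Q)) : t.2.1 ∈ QgpZ Q := by
  have h : AddSubgroup.closure (Nset p Q) ≤
      (Ggrp Q).comap ((AddMonoidHom.fst (Fin n → ℚ) (Fin n → ℚ)).comp
        (AddMonoidHom.snd (Fin n → ℚ) ((Fin n → ℚ) × (Fin n → ℚ)))) := by
    rw [AddSubgroup.closure_le]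
    rintro z ⟨-, hz, -⟩
    exact mem_QgpZ.mp hz
  exact mem_QgpZ.mpr (h ht)

end Aux

/-- Let `p` be a prime, `L = ℤ^n`, and `Q ⊆ L` a fine saturated submonoid.
Set `Q_∞ = ⋃_{k≥0} {x : p^k·x ∈ Q} ⊆ ℚ^n` and `Q_∞^gp = ⋃_{k≥0} {x : p^k·x ∈ Q^gp}`.
Let `π(a,b,c) = (a+b, c−b)`.  Then `π` realizes the group completion of the pushout
`Q_∞ ⊕_{j,Q,ψ} (Q^gp ⊕ Q_∞)`:  on the subgroup generated by `N := Q_∞ × Q^gp × Q_∞` its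
kernel is exactly the subgroup generated by the relations `(q, −q, −q)` (`q ∈ Q`) and its
image is `Q_∞^gp × Q_∞^gp`;  and the saturation of the pushout, computed there, equals
`{(u,0) + (−v,v) : u ∈ Q_∞, v ∈ Q_∞^gp}` — i.e. it is isomorphic to `Q_∞ ⊕ Q_∞^gp`, the
isomorphism identifying the generators as the classes of `(u,0,0)` for `u ∈ Q_∞` and of
`(−v,0,v)` for `v ∈ Q_∞^gp`. -/
theorem stmt5 {p : ℕ} (hp : p.Prime) {n : ℕ}
    (Q : AddSubmonoid (Fin n → ℤ)) (hQfg : Q.FG)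
    (hQsat : ∀ x : Fin n → ℤ, x ∈ AddSubgroup.closure (Q : Set (Fin n → ℤ)) →
      (∃ m : ℕ, 1 ≤ m ∧ m • x ∈ Q) → x ∈ Q) :
    ∃ π : ((Fin n → ℚ) × (Fin n → ℚ) × (Fin n → ℚ)) →+ ((Fin n → ℚ) × (Fin n → ℚ)),
      (∀ t, π t = (t.1 + t.2.1, t.2.2 - t.2.1)) ∧
      -- the kernel of `π` on the group generated by `N` is the relation subgroup
      (∀ t ∈ AddSubgroup.closure (Nset p Q),
        (π t = 0 ↔ t ∈ AddSubgroup.closure (relSet Q))) ∧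
      -- the image of the group generated by `N` is `Q_∞^gp × Q_∞^gp`
      (⇑π '' ((AddSubgroup.closure (Nset p Q) : AddSubgroup _) :
          Set ((Fin n → ℚ) × (Fin n → ℚ) × (Fin n → ℚ))) =
        pRoots p (QgpZ Q) ×ˢ pRoots p (QgpZ Q)) ∧
      -- the saturation of the pushout is `Q_∞ ⊕ Q_∞^gp`, generated as stated
      ({x : (Fin n → ℚ) × (Fin n → ℚ) |
          x ∈ pRoots p (QgpZ Q) ×ˢ pRoots p (QgpZ Q) ∧
          ∃ m : ℕ, 1 ≤ m ∧ m • x ∈ ⇑π '' Nset p Q} =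
        {x : (Fin n → ℚ) × (Fin n → ℚ) |
          ∃ u ∈ pRoots p (QZ Q), ∃ v ∈ pRoots p (QgpZ Q), x = (u, 0) + (-v, v)}) := by
  set π : ((Fin n → ℚ) × (Fin n → ℚ) × (Fin n → ℚ)) →+ ((Fin n → ℚ) × (Fin n → ℚ)) :=
    AddMonoidHom.mk' (fun t => (t.1 + t.2.1, t.2.2 - t.2.1)) (by
      intro a b
      simp only [Prod.fst_add, Prod.snd_add, Prod.mk_add_mk, Prod.mk.injEq]
      constructor <;> abel) with hπdef
  have hπ : ∀ t, π t = (t.1 + t.2.1, t.2.2 - t.2.1) := fun t => rfl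
  refine ⟨π, hπ, ?_, ?_, ?_⟩
  · -- kernel
    intro t ht
    constructor
    · intro h0
      have hmid : t.2.1 ∈ QgpZ Q := middle_mem_QgpZ ht
      obtain ⟨g, hg, hgt⟩ := hmid
      obtain ⟨q1, hq1, q2, hq2, rfl⟩ := mem_closure_sub.mp hg
      rw [hπ, Prod.mk_eq_zero] at h0
      have h1 : t.1 = -t.2.1 := eq_neg_of_add_eq_zero_left h0.1
      have h2 : t.2.2 = t.2.1 := sub_eq_zero.mp h0.2
      have hteq : t = ((ratify q2, -ratify q2, -ratify q2) :
            (Fin n → ℚ) × (Fin n → ℚ) × (Fin n → ℚ)) -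
          (ratify q1, -ratify q1, -ratify q1) := by
        have hmid' : t.2.1 = ratify q1 - ratify q2 := by
          rw [← hgt, map_sub]
        refine Prod.ext ?_ (Prod.ext ?_ ?_)
        · simp only [Prod.fst_sub, h1, hmid']; abel
        · simp only [Prod.snd_sub, Prod.fst_sub, hmid']; abel
        · simp only [Prod.snd_sub, h2, hmid']; abel
      rw [hteq]
      exact sub_mem (AddSubgroup.subset_closure ⟨q2, hq2, rfl⟩)
        (AddSubgroup.subset_closure ⟨q1, hq1, rfl⟩)
    · intro hrel
      have hle : AddSubgroup.closure (relSet Q) ≤ π.ker := by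
        rw [AddSubgroup.closure_le]
        rintro z ⟨q, hq, rfl⟩
        simp only [SetLike.mem_coe, AddMonoidHom.mem_ker, hπ, Prod.mk_eq_zero]
        constructor <;> abel
      exact AddMonoidHom.mem_ker.mp (hle hrel)
  · -- image
    apply Set.Subset.antisymm
    · rintro _ ⟨t, ht, rfl⟩
      have hle : AddSubgroup.closure (Nset p Q) ≤
          ((Ginf p Q).prod (Ginf p Q)).comap π := by
        rw [AddSubgroup.closure_le]
        rintro z ⟨hz1, hz2, hz3⟩
        simp only [SetLike.mem_coe, AddSubgroup.mem_comap, AddSubgroup.mem_prod, hπ]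
        exact ⟨(Ginf p Q).add_mem (Ainf_subset_Ginf hz1) (QgpZ_subset_Ginf hz2),
          (Ginf p Q).sub_mem (Ainf_subset_Ginf hz3) (QgpZ_subset_Ginf hz2)⟩
      have := hle ht
      simp only [AddSubgroup.mem_comap, AddSubgroup.mem_prod] at this
      exact Set.mk_mem_prod this.1 this.2
    · rintro ⟨x, y⟩ ⟨hx, hy⟩
      obtain ⟨a1, ha1, a2, ha2, rfl⟩ := Ginf_sub hp hx
      obtain ⟨c1, hc1, c2, hc2, rfl⟩ := Ginf_sub hp hy
      refine ⟨((a1, 0, c1) : (Fin n → ℚ) × (Fin n → ℚ) × (Fin n → ℚ)) - (a2, 0, c2), ?_, ?_⟩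
      · exact sub_mem
          (AddSubgroup.subset_closure ⟨ha1, mem_QgpZ.mpr (Ggrp Q).zero_mem, hc1⟩)
          (AddSubgroup.subset_closure ⟨ha2, mem_QgpZ.mpr (Ggrp Q).zero_mem, hc2⟩)
      · rw [map_sub, hπ, hπ]
        simp only [Prod.mk_sub_mk]
        refine Prod.ext ?_ ?_ <;> simp <;> abel
  · -- saturation
    ext x
    simp only [Set.mem_setOf_eq, Set.mem_prod]
    constructor
    · rintro ⟨⟨hx1, hx2⟩, m, hm1, t, ht, hteq⟩
      obtain ⟨ha, hb, hc⟩ := ht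
      rw [hπ] at hteq
      have hmx1 : m • x.1 = t.1 + t.2.1 := by
        have := congrArg Prod.fst hteq
        simpa [Prod.smul_fst] using this.symm
      have hmx2 : m • x.2 = t.2.2 - t.2.1 := by
        have := congrArg Prod.snd hteq
        simpa [Prod.smul_snd] using this.symm
      refine ⟨x.1 + x.2, ?_, x.2, hx2, ?_⟩
      · -- x.1 + x.2 ∈ Q_∞ by saturation
        have hu : x.1 + x.2 ∈ Ginf p Q := (Ginf p Q).add_mem hx1 hx2
        have hmu : m • (x.1 + x.2) ∈ pRoots p (QZ Q) := by
          have : m • (x.1 + x.2) = t.1 + t.2.2 := by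
            rw [smul_add, hmx1, hmx2]; abel
          rw [this]
          exact add_mem_Ainf ha hc
        obtain ⟨k, g, hg, hgk⟩ := hu
        obtain ⟨j, hj⟩ := hmu
        -- p^j * m • (p^k • (x.1+x.2)) ∈ QZ
        have hM : (p ^ j * m) • (p ^ k • (x.1 + x.2)) ∈ QZ Q := by
          have heq : (p ^ j * m) • (p ^ k • (x.1 + x.2)) =
              p ^ k • (p ^ j • (m • (x.1 + x.2))) := by
            rw [← mul_smul, ← mul_smul, ← mul_smul]
            ring_nf
          rw [heq]
          exact nsmul_mem_QZ _ hj
        rw [← hgk] at hM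
        obtain ⟨q, hq, hqg⟩ := hM
        have hqg' : q = (p ^ j * m) • g := by
          apply ratify_injective
          rw [hqg, map_nsmul]
        have hgQ : g ∈ Q := by
          refine hQsat g hg ⟨p ^ j * m, ?_, by rw [← hqg']; exact hq⟩
          exact Nat.one_le_iff_ne_zero.mpr
            (Nat.mul_ne_zero (pow_ne_zero _ hp.pos.ne') (Nat.one_le_iff_ne_zero.mp hm1))
        refine ⟨k, ?_⟩
        rw [← hgk]
        exact ⟨g, hgQ, rfl⟩
      · refine Prod.ext ?_ ?_ <;> simp
    · rintro ⟨u, hu, v, hv, rfl⟩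
      obtain ⟨k, hk⟩ := id hv
      refine ⟨⟨?_, ?_⟩, p ^ k, Nat.one_le_iff_ne_zero.mpr (pow_ne_zero _ hp.pos.ne'),
        (p ^ k • u, -(p ^ k • v), 0), ⟨nsmul_mem_Ainf _ hu,
          mem_QgpZ.mpr ((Ggrp Q).neg_mem (mem_QgpZ.mp hk)), zero_mem_Ainf⟩, ?_⟩
      · simpa using mem_Ginf.mp ((Ginf p Q).add_mem (Ainf_subset_Ginf hu) ((Ginf p Q).neg_mem hv))
      · simpa using (hv : v ∈ Ginf p Q)
      · rw [hπ]
        refine Prod.ext ?_ ?_ <;> simp [smul_add] <;> abel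
end
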